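/- arXiv:2602.07394 — 5 statements merged into one kernel-verified Lean document; each statement's English description precedes it below -/
import Mathlib

section
/- Let G be a graph, S a subset of vertices, and u a vertex not in S. Let v be the anchor of u (the vertex of S reached by the lexicographically-least shortest path from u to S), and let the lexicographically-least shortest path from u to v be (u, u_1, ..., u_k, v). Then for every i in {1,...,k}, the anchor of u_i is also v, and the lexicographically-least shortest path from u_i to v is exactly the suffix (u_i, u_{i+1}, ..., u_k, v). -/
/-- Path ordering `≺`: a walk `p` precedes `q` (both starting at the same vertex)
if it is shorter, or has the same length and lexicographically smaller vertex sequence. -/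
def WalkPrec {n : ℕ} {G : SimpleGraph (Fin n)} {u a b : Fin n}
    (p : G.Walk u a) (q : G.Walk u b) : Prop :=
  p.length < q.length ∨
    (p.length = q.length ∧ List.Lex (· < ·) p.support q.support)

/-- `p : G.Walk u v` is the lexicographically-least shortest path from `u` to the set `S`:
its endpoint `v` lies in `S`, it strictly precedes every other walk from `u` to `v`,
and it strictly precedes every walk from `u` to any other vertex of `S`.
In particular `v` is the anchor `anc_S(u)`. -/
def IsAnchorPath {n : ℕ} {G : SimpleGraph (Fin n)} (S : Set (Fin n)) {u v : Fin n}
    (p : G.Walk u v) : Prop :=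
  v ∈ S ∧
    (∀ q : G.Walk u v, q ≠ p → WalkPrec p q) ∧
    (∀ w, w ∈ S → w ≠ v → ∀ q : G.Walk u w, WalkPrec p q)


open SimpleGraph

section Aux
variable {V : Type*} {G : SimpleGraph V}

lemma walk_support_inj : ∀ {u a : V} (p q : G.Walk u a), p.support = q.support → p = q
  | _, _, .nil, .nil, _ => rfl
  | _, _, .nil, .cons _ q', h => by
      simp only [Walk.support_nil, Walk.support_cons, List.cons.injEq, true_and] at h
      exact absurd h.symm q'.support_ne_nil
  | _, _, .cons _ p', .nil, h => by
      simp only [Walk.support_nil, Walk.support_cons, List.cons.injEq, true_and] at h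
      exact absurd h p'.support_ne_nil
  | u, a, .cons h1 p', .cons h2 q', h => by
      simp only [Walk.support_cons, List.cons.injEq, true_and] at h
      obtain ⟨hb, -⟩ : _ ∧ _ := by
        have h3 := h
        rw [p'.support_eq_cons, q'.support_eq_cons] at h3
        exact List.cons.inj h3
      subst hb
      rw [walk_support_inj p' q' h]

lemma walk_support_drop : ∀ {u a : V} (p : G.Walk u a) (i : ℕ), i ≤ p.length →
    (p.drop i).support = p.support.drop i
  | _, _, p, 0, _ => by cases p <;> simp [Walk.drop]
  | _, _, .cons h q, i + 1, hi => by
      simp only [Walk.drop, Walk.support_copy, Walk.support_cons, List.drop_succ_cons]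
      exact walk_support_drop q i (by simpa using hi)

lemma walk_length_drop : ∀ {u a : V} (p : G.Walk u a) (i : ℕ), i ≤ p.length →
    (p.drop i).length = p.length - i
  | _, _, p, 0, _ => by cases p <;> simp [Walk.drop]
  | _, _, .cons h q, i + 1, hi => by
      simp only [Walk.drop, Walk.length_copy, Walk.length_cons, Nat.succ_sub_succ]
      exact walk_length_drop q i (by simpa using hi)

lemma walk_exists_prepend : ∀ {u a : V} (p : G.Walk u a) (i : ℕ), i ≤ p.length →
    ∀ {w : V} (r : G.Walk (p.getVert i) w),
    ∃ c : G.Walk u w, c.length = i + r.length ∧ c.support = p.support.take i ++ r.support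
  | _, _, p, 0, _, _, r => ⟨r.copy p.getVert_zero rfl, by simp⟩
  | _, _, .cons h q, i + 1, hi, _, r => by
      obtain ⟨c', h1, h2⟩ := walk_exists_prepend q i (by simpa using hi) r
      exact ⟨.cons h c', by simp [h1]; omega, by simp [h2]⟩

lemma lex_append_left {α : Type*} [LT α] {l1 l2 : List α} (h : List.Lex (· < ·) l1 l2) :
    ∀ t : List α, List.Lex (· < ·) (t ++ l1) (t ++ l2)
  | [] => h
  | a :: t => List.Lex.cons (lex_append_left h t)

end Aux

/-- If `p = (u, u_1, ..., u_k, v)` is the lexicographically-least shortest path from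
`u ∉ S` to its anchor `v ∈ S`, then for every interior vertex `u_i` (0 < i < length p),
the anchor of `u_i` is also `v`, and the lexicographically-least shortest path from
`u_i` to `S` is exactly the suffix `(u_i, ..., u_k, v)` of `p`. -/
theorem stmt0 {n : ℕ} {G : SimpleGraph (Fin n)} (S : Set (Fin n)) (u v : Fin n)
    (hu : u ∉ S) (p : G.Walk u v) (hp : IsAnchorPath S p) :
    ∀ i, 0 < i → i < p.length →
      ∃ q : G.Walk (p.getVert i) v,
        IsAnchorPath S q ∧ q.support = p.support.drop i := by
  intro i hi0 hip
  obtain ⟨hvS, hmin_v, hmin_w⟩ := hp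
  have hile : i ≤ p.length := hip.le
  set q0 : G.Walk (p.getVert i) v := p.drop i with hq0
  have hq0sup : q0.support = p.support.drop i := walk_support_drop p i hile
  have hq0len : p.length = i + q0.length := by
    have h := walk_length_drop p i hile
    rw [← hq0] at h
    omega
  have hpsup : p.support = p.support.take i ++ q0.support := by
    rw [hq0sup, List.take_append_drop]
  -- key: no walk from `p.getVert i` to a vertex of `S` strictly precedes `q0`
  have key : ∀ w, w ∈ S → ∀ r : G.Walk (p.getVert i) w, ¬ WalkPrec r q0 := by
    intro w hw r hW
    obtain ⟨c, hclen, hcsup⟩ := walk_exists_prepend p i hile r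
    have hpc : WalkPrec p c := by
      by_cases hwv : w = v
      · subst hwv
        refine hmin_v c ?_
        intro hEq
        rcases hW with h | ⟨h, hlex⟩
        · have := congrArg SimpleGraph.Walk.length hEq
          omega
        · have hs : c.support = p.support := congrArg _ hEq
          rw [hcsup] at hs
          have hrs : r.support = q0.support := List.append_cancel_left (hs.trans hpsup)
          rw [hrs] at hlex
          exact absurd hlex (by
            have : IsIrrefl (List (Fin n)) (List.Lex (· < ·)) := inferInstance
            exact this.irrefl _)
      · exact hmin_w w hw hwv c
    rcases hW with h | ⟨he, hlex⟩
    · rcases hpc with h2 | ⟨h2, -⟩ <;> omega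
    · have hlc : List.Lex (· < ·) c.support p.support := by
        rw [hcsup]
        conv_rhs => rw [hpsup]
        exact lex_append_left hlex _
      rcases hpc with h2 | ⟨-, h3⟩
      · omega
      · have htr : IsTrans (List (Fin n)) (List.Lex (· < ·)) := ⟨fun _ _ _ h1 h2 => List.lt_trans h1 h2⟩
        have hirr : IsIrrefl (List (Fin n)) (List.Lex (· < ·)) := inferInstance
        exact hirr.irrefl _ (htr.trans _ _ _ h3 hlc)
  refine ⟨q0, ⟨hvS, ?_, ?_⟩, hq0sup⟩
  · -- minimality among walks to v
    intro r hne
    rcases Nat.lt_trichotomy q0.length r.length with h | h | h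
    · exact Or.inl h
    · have htc : IsTrichotomous (List (Fin n)) (List.Lex (· < ·)) := inferInstance
      rcases trichotomous_of (List.Lex (· < ·)) q0.support r.support with hl | hl | hl
      · exact Or.inr ⟨h, hl⟩
      · exact absurd (walk_support_inj r q0 hl.symm) hne
      · exact absurd (Or.inr ⟨h.symm, hl⟩) (key v hvS r)
    · exact absurd (Or.inl h) (key v hvS r)
  · -- minimality towards other vertices of S
    intro w hw hwv r
    rcases Nat.lt_trichotomy q0.length r.length with h | h | h
    · exact Or.inl h
    · have htc : IsTrichotomous (List (Fin n)) (List.Lex (· < ·)) := inferInstance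
      rcases trichotomous_of (List.Lex (· < ·)) q0.support r.support with hl | hl | hl
      · exact Or.inr ⟨h, hl⟩
      · exfalso
        apply hwv
        have h1 : q0.support.getLast? = some v := by
          rw [List.getLast?_eq_getLast q0.support_ne_nil, q0.getLast_support]
        have h2 : r.support.getLast? = some w := by
          rw [List.getLast?_eq_getLast r.support_ne_nil, r.getLast_support]
        rw [hl, h2] at h1
        exact Option.some.inj h1
      · exact absurd (Or.inr ⟨h.symm, hl⟩) (key w hw r)
    · exact absurd (Or.inl h) (key w hw r)
end

section
/- Let G be a graph and S a subset of vertices such that every vertex has a path to S. Suppose ℓ_i and ℓ_j are vertices outside S with anchors a_i = anc_S(ℓ_i) and a_j = anc_S(ℓ_j). If the lexicographically-least shortest paths P_G(ℓ_i, a_i) and P_G(ℓ_j, a_j) intersect at some vertex u, then the suffixes of the two paths starting at u are identical (in particular a_i = a_j). -/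
section Aux

variable {n : ℕ} {G : SimpleGraph (Fin n)}

lemma lex_asymm {l₁ l₂ : List (Fin n)} (h : List.Lex (· < ·) l₁ l₂) :
    ¬ List.Lex (· < ·) l₂ l₁ := by
  exact asymm h

lemma lex_append_left_s1 {l s t : List (Fin n)} (h : List.Lex (· < ·) (l ++ s) (l ++ t)) :
    List.Lex (· < ·) s t := by
  induction l with
  | nil => simpa using h
  | cons a l ih => exact ih (List.lex_cons_iff.mp h)

/-- The support of a takeUntil walk is `l ++ [u]` with `u ∉ l`. -/
lemma takeUntil_support {v w u : Fin n} (p : G.Walk v w) (hu : u ∈ p.support) :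
    ∃ l : List (Fin n), (p.takeUntil u hu).support = l ++ [u] ∧ u ∉ l := by
  set t := p.takeUntil u hu with ht
  have h1 : t.support.reverse = u :: t.support.reverse.tail := by
    rw [← SimpleGraph.Walk.support_reverse]
    exact t.reverse.support_eq_cons
  have h2 : t.support = t.support.reverse.tail.reverse ++ [u] := by
    conv_lhs => rw [← t.support.reverse_reverse, h1]
    simp
  refine ⟨t.support.reverse.tail.reverse, h2, ?_⟩
  have hc : t.support.count u = 1 := p.count_support_takeUntil_eq_one hu
  rw [h2] at hc
  simp only [List.count_append, List.count_singleton_self] at hc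
  simpa using List.count_eq_zero.mp (by omega : List.count u t.support.reverse.tail.reverse = 0)

lemma support_drop_indexOf {v w u : Fin n} (p : G.Walk v w) (hu : u ∈ p.support) :
    p.support.drop (p.support.idxOf u) = (p.dropUntil u hu).support := by
  obtain ⟨l, hl, hul⟩ := takeUntil_support p hu
  have hsplit : p.support = l ++ (u :: (p.dropUntil u hu).support.tail) := by
    conv_lhs => rw [← p.take_spec hu]
    rw [SimpleGraph.Walk.support_append, hl, List.append_assoc]
    simp
  rw [hsplit, List.idxOf_append_of_notMem hul]
  simp only [List.idxOf_cons_self, Nat.add_zero]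
  rw [List.drop_append_of_le_length (le_refl l.length)]
  simp [((p.dropUntil u hu).support_eq_cons).symm]

/-- key comparison: from `WalkPrec p (takeUntil ++ r)` extract info about the suffix. -/
lemma suffix_prec {ℓ a b u : Fin n} (p : G.Walk ℓ a) (hu : u ∈ p.support)
    (r : G.Walk u b)
    (h : WalkPrec p ((p.takeUntil u hu).append r)) :
    (p.dropUntil u hu).length < r.length ∨
      ((p.dropUntil u hu).length = r.length ∧
        List.Lex (· < ·) (p.dropUntil u hu).support.tail r.support.tail) := by
  have hlen : p.length = (p.takeUntil u hu).length + (p.dropUntil u hu).length := by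
    conv_lhs => rw [← p.take_spec hu]
    rw [SimpleGraph.Walk.length_append]
  have hsup : p.support = (p.takeUntil u hu).support ++ (p.dropUntil u hu).support.tail := by
    conv_lhs => rw [← p.take_spec hu]
    rw [SimpleGraph.Walk.support_append]
  rcases h with h | ⟨h1, h2⟩
  · left
    rw [hlen, SimpleGraph.Walk.length_append] at h
    omega
  · right
    rw [hlen, SimpleGraph.Walk.length_append] at h1
    refine ⟨by omega, ?_⟩
    rw [hsup, SimpleGraph.Walk.support_append] at h2
    exact lex_append_left_s1 h2

lemma both_prec_false {ℓ₁ ℓ₂ a u : Fin n}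
    (p₁ : G.Walk ℓ₁ a) (h₁ : u ∈ p₁.support)
    (p₂ : G.Walk ℓ₂ a) (h₂ : u ∈ p₂.support)
    (hp₁ : WalkPrec p₁ ((p₁.takeUntil u h₁).append (p₂.dropUntil u h₂)))
    (hp₂ : WalkPrec p₂ ((p₂.takeUntil u h₂).append (p₁.dropUntil u h₁))) : False := by
  have k₁ := suffix_prec p₁ h₁ (p₂.dropUntil u h₂) hp₁
  have k₂ := suffix_prec p₂ h₂ (p₁.dropUntil u h₁) hp₂
  rcases k₁ with k₁ | ⟨e₁, l₁⟩ <;> rcases k₂ with k₂ | ⟨e₂, l₂⟩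
  · omega
  · omega
  · omega
  · exact lex_asymm l₁ l₂

end Aux

/-- main -/
theorem stmt1 {n : ℕ} {G : SimpleGraph (Fin n)} (S : Set (Fin n))
    (ℓi ℓj ai aj u : Fin n) (hi : ℓi ∉ S) (hj : ℓj ∉ S)
    (pi : G.Walk ℓi ai) (pj : G.Walk ℓj aj)
    (hpi : IsAnchorPath S pi) (hpj : IsAnchorPath S pj)
    (hui : u ∈ pi.support) (huj : u ∈ pj.support) :
    ai = aj ∧
      pi.support.drop (pi.support.idxOf u) =
        pj.support.drop (pj.support.idxOf u) := by
  obtain ⟨hiS, hmin_i, hminS_i⟩ := hpi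
  obtain ⟨hjS, hmin_j, hminS_j⟩ := hpj
  have hij : ai = aj := by
    by_contra hne
    have hq1 : WalkPrec pi ((pi.takeUntil u hui).append (pj.dropUntil u huj)) :=
      hminS_i aj hjS (fun h => hne h.symm) _
    have hq2 : WalkPrec pj ((pj.takeUntil u huj).append (pi.dropUntil u hui)) :=
      hminS_j ai hiS hne _
    have k₁ := suffix_prec pi hui (pj.dropUntil u huj) hq1
    have k₂ := suffix_prec pj huj (pi.dropUntil u hui) hq2
    rcases k₁ with k₁ | ⟨e₁, l₁⟩ <;> rcases k₂ with k₂ | ⟨e₂, l₂⟩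
    · omega
    · omega
    · omega
    · exact lex_asymm l₁ l₂
  subst hij
  refine ⟨rfl, ?_⟩
  rw [support_drop_indexOf pi hui, support_drop_indexOf pj huj]
  -- show supports of the two suffixes are equal
  by_cases h1 : (pi.takeUntil u hui).append (pj.dropUntil u huj) = pi
  · have := congrArg SimpleGraph.Walk.support h1
    rw [SimpleGraph.Walk.support_append] at this
    conv_rhs at this => rw [← pi.take_spec hui, SimpleGraph.Walk.support_append]
    have htail : (pj.dropUntil u huj).support.tail = (pi.dropUntil u hui).support.tail :=
      List.append_cancel_left this
    rw [(pi.dropUntil u hui).support_eq_cons, (pj.dropUntil u huj).support_eq_cons, htail]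
  · by_cases h2 : (pj.takeUntil u huj).append (pi.dropUntil u hui) = pj
    · have := congrArg SimpleGraph.Walk.support h2
      rw [SimpleGraph.Walk.support_append] at this
      conv_rhs at this => rw [← pj.take_spec huj, SimpleGraph.Walk.support_append]
      have htail : (pi.dropUntil u hui).support.tail = (pj.dropUntil u huj).support.tail :=
        List.append_cancel_left this
      rw [(pi.dropUntil u hui).support_eq_cons, (pj.dropUntil u huj).support_eq_cons, htail]
    · exact (both_prec_false pi hui pj huj (hmin_i _ h1) (hmin_j _ h2)).elim
end

section
/- Let G = (V,E) be a connected graph, S ⊆ V a nonempty set of vertices, and T_0 a spanning tree of the subgraph induced on S (assume G[S] is connected). Let E' be the union of the edges of T_0 together with, for every vertex u ∈ V \ S, the edges of the lexicographically-least shortest path P_G(u, anc_S(u)) from u to its anchor in S. Then the subgraph T = (V, E') is a spanning tree of G. -/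
section Aux

open SimpleGraph

variable {n : ℕ} {G : SimpleGraph (Fin n)} {S : Set (Fin n)}

lemma walkPrec_asymm {u a b : Fin n} {p : G.Walk u a} {q : G.Walk u b}
    (h1 : WalkPrec p q) (h2 : WalkPrec q p) : False := by
  rcases h1 with h1 | ⟨hl1, hx1⟩ <;> rcases h2 with h2 | ⟨hl2, hx2⟩
  · omega
  · omega
  · omega
  · exact asymm hx1 hx2

lemma walkPrec_cons {u v a b : Fin n} (h : G.Adj u v) {p : G.Walk v a} {q : G.Walk v b}
    (hpq : WalkPrec (SimpleGraph.Walk.cons h p) (SimpleGraph.Walk.cons h q)) :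
    WalkPrec p q := by
  rcases hpq with h1 | ⟨h1, h2⟩
  · left; simpa using h1
  · right
    refine ⟨by simpa using h1, ?_⟩
    rw [Walk.support_cons, Walk.support_cons] at h2
    exact List.lex_cons_iff.mp h2

lemma anchor_eq {u v w : Fin n} {p : G.Walk u v} {q : G.Walk u w}
    (hp : IsAnchorPath S p) (hq : IsAnchorPath S q) :
    ∃ hvw : v = w, p.copy rfl hvw = q := by
  obtain ⟨hvS, hpmin, hpS⟩ := hp
  obtain ⟨hwS, hqmin, hqS⟩ := hq
  by_cases hvw : v = w
  · subst hvw
    refine ⟨rfl, ?_⟩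
    rw [Walk.copy_rfl_rfl]
    by_contra hne
    exact walkPrec_asymm (hpmin q (fun h => hne h.symm)) (hqmin p hne)
  · exact absurd (hqS v hvS hvw p) (fun h2 => walkPrec_asymm (hpS w hwS (fun h => hvw h.symm) q) h2)

/-- Every edge of an anchor path is the "first edge" of some anchor path, and first
edges decrease path length by one. -/
lemma key_lemma (anc : Fin n → Fin n) (pth : ∀ u, G.Walk u (anc u))
    (hanc : ∀ u, u ∉ S → IsAnchorPath S (pth u)) :
    ∀ N u, u ∉ S → (pth u).length ≤ N → ∀ e ∈ (pth u).edges,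
      ∃ z, z ∉ S ∧ e = s(z, (pth z).getVert 1) ∧
        ((pth z).getVert 1 ∉ S →
          (pth ((pth z).getVert 1)).length + 1 = (pth z).length) := by
  intro N
  induction N with
  | zero =>
    intro u hu hlen e he
    exfalso
    have h0 : (pth u).length = 0 := by omega
    exact hu ((Walk.eq_of_length_eq_zero h0) ▸ (hanc u hu).1)
  | succ N ih =>
    intro u huS hlen e he
    obtain ⟨hancuS, hmin, hminS⟩ := hanc u huS
    have hne : u ≠ anc u := fun h => huS (h ▸ hancuS)
    have hnn : ¬ (pth u).Nil := by
      rw [Walk.nil_iff_length_eq]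
      exact fun h => hne (Walk.eq_of_length_eq_zero h)
    obtain ⟨v, hadj, q, hq⟩ := Walk.not_nil_iff.mp hnn
    have hgv : (pth u).getVert 1 = v := by
      rw [hq]
      rw [show (1 : ℕ) = 0 + 1 from rfl, Walk.getVert_cons_succ]
      exact Walk.getVert_zero q
    have hlen' : (pth u).length = q.length + 1 := by rw [hq]; simp
    by_cases hvS : v ∈ S
    · -- the path has length one
      have hva : v = anc u := by
        by_contra hva
        have h1 := hminS v hvS hva (Walk.cons hadj Walk.nil)
        rw [hq] at h1
        rcases h1 with h1 | ⟨h1, _⟩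
        · simp [Walk.length_cons] at h1
        · simp [Walk.length_cons] at h1
          exact hva h1.eq
      have hq0 : q.length = 0 := by
        by_contra hq0
        have hne2 : ((Walk.cons hadj Walk.nil).copy rfl hva : G.Walk u (anc u)) ≠ pth u := by
          intro h
          have := congrArg Walk.length h
          rw [hq] at this
          simp only [Walk.length_copy, Walk.length_cons, Walk.length_nil] at this
          omega
        have h1 := hmin _ hne2
        rw [hq] at h1
        rcases h1 with h1 | ⟨h1, _⟩ <;> simp only [Walk.length_copy, Walk.length_cons, Walk.length_nil] at h1 <;> omega
      have hqe : q.edges = [] := List.length_eq_zero_iff.mp (by simp [hq0])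
      rw [hq] at he
      rw [Walk.edges_cons, hqe] at he
      simp at he
      refine ⟨u, huS, by rw [hgv]; exact he, fun hcond => absurd (hgv ▸ hvS) hcond⟩
    · -- v ∉ S : the tail is the anchor path of v
      have hqanchor : IsAnchorPath S q := by
        refine ⟨hancuS, ?_, ?_⟩
        · intro r hr
          have hne2 : Walk.cons hadj r ≠ pth u := by
            rw [hq]
            intro h
            apply hr
            injection h with h1 h2 h3
          have h1 := hmin _ hne2
          rw [hq] at h1
          exact walkPrec_cons hadj h1
        · intro w hw hwne r
          have h1 := hminS w hw hwne (Walk.cons hadj r)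
          rw [hq] at h1
          exact walkPrec_cons hadj h1
      obtain ⟨hancv, hcopy⟩ := anchor_eq (hanc v hvS) hqanchor
      have hlenv : (pth v).length + 1 = (pth u).length := by
        rw [hlen', ← hcopy, Walk.length_copy]
      have hedges : q.edges = (pth v).edges := by rw [← hcopy, Walk.edges_copy]
      rw [hq, Walk.edges_cons] at he
      rcases List.mem_cons.mp he with he | he
      · refine ⟨u, huS, by rw [hgv]; exact he, fun _ => by rw [hgv]; exact hlenv⟩
      · exact ih v hvS (by omega) e (hedges ▸ he)

end Aux

/-- Let `G` be connected, `S ⊆ V` nonempty with `G[S]` connected, and `T0` a spanning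
tree of the subgraph induced on `S`.  Let `E'` be the edges of `T0` together with,
for each `u ∉ S`, the edges of the lexicographically-least shortest path from `u`
to its anchor `anc_S(u)`.  Then `T = (V, E')` is a spanning tree of `G`. -/
theorem stmt2 {n : ℕ} (G : SimpleGraph (Fin n)) (hG : G.Connected)
    (S : Set (Fin n)) (hS : S.Nonempty)
    (T0 : SimpleGraph (Fin n)) (hT0le : T0 ≤ G)
    (hT0S : ∀ a b, T0.Adj a b → a ∈ S ∧ b ∈ S)
    (hT0ac : T0.IsAcyclic)
    (hT0conn : ∀ a ∈ S, ∀ b ∈ S, T0.Reachable a b)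
    (anc : Fin n → Fin n) (pth : ∀ u, G.Walk u (anc u))
    (hanc : ∀ u, u ∉ S → IsAnchorPath S (pth u)) :
    (SimpleGraph.fromEdgeSet
        (T0.edgeSet ∪ ⋃ u ∈ Sᶜ, {e | e ∈ (pth u).edges})).IsTree ∧
      SimpleGraph.fromEdgeSet
        (T0.edgeSet ∪ ⋃ u ∈ Sᶜ, {e | e ∈ (pth u).edges}) ≤ G := by
  classical
  open SimpleGraph in
  set Es : Set (Sym2 (Fin n)) := T0.edgeSet ∪ ⋃ u ∈ Sᶜ, {e | e ∈ (pth u).edges} with hEsdef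
  set T : SimpleGraph (Fin n) := SimpleGraph.fromEdgeSet Es with hTdef
  have hmemU : ∀ e : Sym2 (Fin n),
      e ∈ (⋃ u ∈ Sᶜ, {e | e ∈ (pth u).edges}) ↔ ∃ u, u ∉ S ∧ e ∈ (pth u).edges := by
    intro e; simp [Set.mem_iUnion]
  have hsubG : Es ⊆ G.edgeSet := by
    intro e he
    rcases he with he | he
    · exact SimpleGraph.edgeSet_mono hT0le he
    · obtain ⟨u, huS, he⟩ := (hmemU e).mp he
      exact Walk.edges_subset_edgeSet _ he
  have hTle : T ≤ G := by
    intro a b hab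
    rw [hTdef, SimpleGraph.fromEdgeSet_adj] at hab
    exact (SimpleGraph.mem_edgeSet G).mp (hsubG hab.1)
  have hT0T : T0 ≤ T := by
    intro a b hab
    rw [hTdef, SimpleGraph.fromEdgeSet_adj]
    exact ⟨Or.inl ((SimpleGraph.mem_edgeSet T0).mpr hab), hab.ne⟩
  -- edges of anchor paths are in T
  have hpthT : ∀ u, u ∉ S → ∀ e ∈ (pth u).edges, e ∈ T.edgeSet := by
    intro u hu e he
    rw [hTdef, SimpleGraph.edgeSet_fromEdgeSet]
    refine ⟨Or.inr ((hmemU e).mpr ⟨u, hu, he⟩), ?_⟩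
    exact G.not_isDiag_of_mem_edgeSet (Walk.edges_subset_edgeSet _ he)
  -- connectivity
  have toS : ∀ a : Fin n, ∃ s ∈ S, T.Reachable a s := by
    intro a
    by_cases h : a ∈ S
    · exact ⟨a, h, Reachable.refl _⟩
    · exact ⟨anc a, (hanc a h).1, ⟨(pth a).transfer T (hpthT a h)⟩⟩
  have hpre : T.Preconnected := by
    intro a b
    obtain ⟨sa, hsa, ra⟩ := toS a
    obtain ⟨sb, hsb, rb⟩ := toS b
    exact ra.trans (((hT0conn sa hsa sb hsb).mono hT0T).trans rb.symm)
  have hconn : T.Connected := by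
    obtain ⟨s0, _⟩ := hS
    have : Nonempty (Fin n) := ⟨s0⟩
    exact ⟨hpre⟩
  -- acyclicity
  have hacyc : T.IsAcyclic := by
    intro x c hc
    have hce : ∀ e ∈ c.edges, e ∈ Es ∧ ¬ e.IsDiag := by
      intro e he
      have h1 := c.edges_subset_edgeSet he
      rw [hTdef, SimpleGraph.edgeSet_fromEdgeSet] at h1
      exact h1
    have hclass : ∀ e ∈ c.edges, e ∈ T0.edgeSet ∨
        ∃ z, z ∉ S ∧ e = s(z, (pth z).getVert 1) ∧
          ((pth z).getVert 1 ∉ S →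
            (pth ((pth z).getVert 1)).length + 1 = (pth z).length) := by
      intro e he
      rcases (hce e he).1 with h | h
      · exact Or.inl h
      · obtain ⟨u, hu, he'⟩ := (hmemU e).mp h
        exact Or.inr (key_lemma anc pth hanc (pth u).length u hu le_rfl e he')
    by_cases hallS : ∀ y ∈ c.support, y ∈ S
    · have hT0e : ∀ e ∈ c.edges, e ∈ T0.edgeSet := by
        intro e he
        rcases hclass e he with h | ⟨z, hz, hez, _⟩
        · exact h
        · exact absurd (hallS z (Walk.fst_mem_support_of_mem_edges c (hez ▸ he))) hz
      exact hT0ac (c.transfer T0 hT0e) (hc.transfer hT0e)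
    · push_neg at hallS
      obtain ⟨y0, hy0c, hy0S⟩ := hallS
      set F : Finset (Fin n) := c.support.toFinset.filter (fun x => x ∉ S) with hFdef
      have hFne : F.Nonempty := ⟨y0, by simp [hFdef, hy0c, hy0S]⟩
      obtain ⟨u, huF, hmax⟩ := F.exists_max_image (fun x => (pth x).length) hFne
      rw [hFdef, Finset.mem_filter, List.mem_toFinset] at huF
      obtain ⟨huc, huS⟩ := huF
      -- every edge of the cycle incident to `u` is the first edge of `pth u`
      have hinc : ∀ e ∈ c.edges, u ∈ e → e = s(u, (pth u).getVert 1) := by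
        intro e he hue
        rcases hclass e he with h | ⟨z, hz, hez, hcond⟩
        · exfalso
          obtain ⟨b, rfl⟩ := Sym2.mem_iff_exists.mp hue
          exact huS (hT0S u b ((SimpleGraph.mem_edgeSet T0).mp h)).1
        · subst hez
          rcases Sym2.mem_iff.mp hue with rfl | hu2
          · rfl
          · exfalso
            have hzc : z ∈ c.support := Walk.fst_mem_support_of_mem_edges c he
            have hzF : z ∈ F := by
              rw [hFdef, Finset.mem_filter, List.mem_toFinset]; exact ⟨hzc, hz⟩
            have h1 := hmax z hzF
            have h2 := hcond (hu2 ▸ huS)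
            rw [← hu2] at h2
            omega
      -- rotate the cycle to start at `u` and extract two distinct incident edges
      have hc' := hc.rotate huc
      have hperm : List.Perm (c.rotate u huc).edges c.edges := (c.rotate_edges u huc).perm
      have h3len := hc'.three_le_length
      have hc'nn : ¬ (c.rotate u huc).Nil := by
        rw [Walk.not_nil_iff_lt_length]; omega
      obtain ⟨v, hadj, q, hq⟩ := Walk.not_nil_iff.mp hc'nn
      have hqlen : 2 ≤ q.length := by
        rw [hq] at h3len; simpa using h3len
      have hqrnn : ¬ q.reverse.Nil := by
        rw [Walk.not_nil_iff_lt_length, Walk.length_reverse]; omega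
      obtain ⟨w, hadj2, q2, hq2⟩ := Walk.not_nil_iff.mp hqrnn
      have he2q : s(u, w) ∈ q.edges := by
        have h1 : s(u, w) ∈ q.reverse.edges := by rw [hq2]; simp
        rwa [Walk.edges_reverse, List.mem_reverse] at h1
      have he1 : s(u, v) ∈ c.edges := hperm.subset (by rw [hq]; simp)
      have he2 : s(u, w) ∈ c.edges := hperm.subset (by rw [hq]; simp [he2q])
      have hnd : (c.rotate u huc).edges.Nodup := hc'.edges_nodup
      have hne12 : s(u, v) ∉ q.edges := by
        rw [hq, Walk.edges_cons] at hnd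
        exact (List.nodup_cons.mp hnd).1
      have hcontra : s(u, v) ≠ s(u, w) := fun h => hne12 (h ▸ he2q)
      exact hcontra (by
        rw [hinc _ he1 (Sym2.mem_mk_left u v), hinc _ he2 (Sym2.mem_mk_left u w)])
  exact ⟨⟨hconn, hacyc⟩, hTle⟩
end

section
/- Let T be a spanning tree of a finite graph, rooted at s, and L a set of vertices containing s. Let the vertex set outside L be partitioned into components C_1, ..., C_m, and suppose each component C_j selects its vertex x_j of minimum rank (hop distance along the tree path to s until first hitting L) and proposes the first edge of the tree path from x_j to s. Then the union of L's vertices, the components, and all proposed edges is connected: every component C_j is connected to L via a sequence of proposed edges. -/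
/-- Let `T` be a spanning tree of a finite graph `G`, rooted at `s ∈ L`.  The vertices
outside `L` are partitioned into connected components `C j`; for a vertex `v`,
`pth v` is the unique tree path from `v` to `s` and its rank is
`sInf {i | (pth v).getVert i ∈ L}`.  Each component `C j` selects a vertex `x j` of
minimum rank and proposes the first edge of the tree path from `x j` to `s`.
Then in the graph `K` whose edges are: pairs inside `L`, pairs inside a common
component, and all proposed edges, every vertex is connected to `L`
(indeed reachable from `s`). -/
theorem stmt9 {V : Type*} [Fintype V] {ι : Type*}
    (G T : SimpleGraph V) (hT : T.IsTree) (hTG : T ≤ G)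
    (s : V) (L : Set V) (hs : s ∈ L)
    (C : ι → Set V)
    (hCcover : ∀ v, v ∉ L → ∃! j, v ∈ C j)
    (hCL : ∀ j, ∀ v ∈ C j, v ∉ L)
    (hCconn : ∀ j, ∀ a ∈ C j, ∀ b ∈ C j,
      ∃ w : G.Walk a b, ∀ x ∈ w.support, x ∈ C j)
    (pth : ∀ v : V, T.Walk v s) (hpth : ∀ v, (pth v).IsPath)
    (x : ι → V) (hx : ∀ j, x j ∈ C j)
    (hxmin : ∀ j, ∀ y ∈ C j,
      sInf {i | (pth (x j)).getVert i ∈ L} ≤ sInf {i | (pth y).getVert i ∈ L}) :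
    ∀ v, (SimpleGraph.fromRel (fun a b =>
      (a ∈ L ∧ b ∈ L) ∨ (∃ j, a ∈ C j ∧ b ∈ C j) ∨
        (∃ j, s(a, b) = s(x j, (pth (x j)).getVert 1)))).Reachable v s := by
  set K := SimpleGraph.fromRel (fun a b =>
      (a ∈ L ∧ b ∈ L) ∨ (∃ j, a ∈ C j ∧ b ∈ C j) ∨
        (∃ j, s(a, b) = s(x j, (pth (x j)).getVert 1))) with hK
  set r : V → ℕ := fun v => sInf {i | (pth v).getVert i ∈ L} with hr
  -- the rank set is nonempty
  have hne : ∀ v : V, ((pth v).length) ∈ {i | (pth v).getVert i ∈ L} := by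
    intro v; simp [SimpleGraph.Walk.getVert_length, hs]
  have hmem : ∀ v : V, (pth v).getVert (r v) ∈ L := fun v =>
    Nat.sInf_mem ⟨_, hne v⟩
  have hpos : ∀ v : V, v ∉ L → 1 ≤ r v := by
    intro v hv
    by_contra h
    have h0 : r v = 0 := by omega
    have := hmem v
    rw [h0] at this
    simp [SimpleGraph.Walk.getVert_zero] at this
    exact hv this
  -- key : rank decreases by one along the tree path
  have hstep : ∀ v : V, v ∉ L → r ((pth v).getVert 1) + 1 = r v := by
    intro v hv
    have hvs : v ≠ s := fun h => hv (h ▸ hs)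
    have hnil : ¬ (pth v).Nil := SimpleGraph.Walk.not_nil_of_ne hvs
    set u := (pth v).getVert 1 with hu
    -- uniqueness of paths in a tree
    have hwalk : pth u = (pth v).tail :=
      ((hT.existsUnique_path u s).unique (hpth u) ((hpth v).tail))
    have hset : {i | (pth u).getVert i ∈ L} = {i | (pth v).getVert (i + 1) ∈ L} := by
      ext i
      simp [hwalk, SimpleGraph.Walk.getVert_tail _]
    have h1 : 1 ≤ r v := hpos v hv
    have hmm : (pth v).getVert (r v) ∈ L := hmem v
    have hle : r u ≤ r v - 1 := by
      apply Nat.sInf_le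
      rw [hset]
      show (pth v).getVert (r v - 1 + 1) ∈ L
      rwa [Nat.sub_add_cancel h1]
    have hge : r v - 1 ≤ r u := by
      have hmu : (pth v).getVert (r u + 1) ∈ L := by
        have h2 := hmem u
        rwa [hwalk, SimpleGraph.Walk.getVert_tail _] at h2
      have : r v ≤ r u + 1 := Nat.sInf_le hmu
      omega
    omega
  -- main induction
  suffices h : ∀ n : ℕ, ∀ v : V, r v ≤ n → K.Reachable v s by
    intro v; exact h (r v) v le_rfl
  intro n
  induction n using Nat.strong_induction_on with
  | _ n ih =>
    intro v hrv
    by_cases hvL : v ∈ L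
    · by_cases hvs : v = s
      · exact hvs ▸ SimpleGraph.Reachable.refl v
      · exact (SimpleGraph.fromRel_adj .. |>.mpr ⟨hvs, Or.inl (Or.inl ⟨hvL, hs⟩)⟩).reachable
    · obtain ⟨j, hj, -⟩ := hCcover v hvL
      -- v reachable to x j inside the component
      have hvx : K.Reachable v (x j) := by
        by_cases hvx : v = x j
        · exact hvx ▸ SimpleGraph.Reachable.refl v
        · exact (SimpleGraph.fromRel_adj .. |>.mpr
            ⟨hvx, Or.inl (Or.inr (Or.inl ⟨j, hj, hx j⟩))⟩).reachable
      have hxL : x j ∉ L := hCL j _ (hx j)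
      have hxs : x j ≠ s := fun h => hxL (h ▸ hs)
      have hnil : ¬ (pth (x j)).Nil := SimpleGraph.Walk.not_nil_of_ne hxs
      set u := (pth (x j)).getVert 1 with hu
      have hadjT : T.Adj (x j) u := by
        simpa [hu] using SimpleGraph.Walk.adj_snd hnil
      have hxu : K.Adj (x j) u :=
        SimpleGraph.fromRel_adj .. |>.mpr ⟨hadjT.ne, Or.inl (Or.inr (Or.inr ⟨j, rfl⟩))⟩
      have hrx : r (x j) ≤ r v := hxmin j v hj
      have hru : r u + 1 = r (x j) := hstep (x j) hxL
      have h1 : 1 ≤ r v := hpos v hvL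
      have hn1 : r u ≤ n - 1 := by omega
      have hus : K.Reachable u s := ih (n - 1) (by omega) u hn1
      exact hvx.trans (hxu.reachable.trans hus)
end

section
/- Let G = (V,E) be a graph, S ⊆ V, and u ∉ S a vertex with a path to S. Consider a lexicographical BFS from u: at each level t, vertices discovered at level t−1 are processed in increasing order of ID, and their neighbors are explored in increasing order. Let v be the first vertex discovered (in BFS order) that has a neighbor in S, and let c be the smallest-ID neighbor of v in S. Then the lexicographically-least shortest path from u to the set S is the concatenation of the BFS tree path from u to v with the edge (v, c), and it ends at the anchor anc_S(u) = c. -/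
/-- `p` is the lexicographically-least shortest walk from `u` to `v`. -/
def IsLLSP {n : ℕ} {G : SimpleGraph (Fin n)} {u v : Fin n} (p : G.Walk u v) : Prop :=
  ∀ q : G.Walk u v, q ≠ p → WalkPrec p q

/- ## Auxiliary lemmas -/

/-- Two walks with the same endpoints and the same support are equal. -/
lemma walk_eq_of_support_eq {n : ℕ} {G : SimpleGraph (Fin n)} :
    ∀ {u v : Fin n} (p q : G.Walk u v), p.support = q.support → p = q := by
  intro u v p
  induction p with
  | nil =>
    intro q hq
    cases q with
    | nil => rfl
    | cons h q' => simp [SimpleGraph.Walk.support_cons] at hq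
      -- support nil = [u], support (cons ..) = u :: support q' with support q' ≠ []
  | cons h p' ih =>
    intro q hq
    cases q with
    | nil => simp [SimpleGraph.Walk.support_cons] at hq
    | cons h' q' =>
      simp only [SimpleGraph.Walk.support_cons, List.cons.injEq, true_and] at hq
      have hx : p'.support.head (SimpleGraph.Walk.support_ne_nil _) =
          q'.support.head (SimpleGraph.Walk.support_ne_nil _) := by
        congr 1
      rw [SimpleGraph.Walk.head_support, SimpleGraph.Walk.head_support] at hx
      subst hx
      rw [ih q' hq]

/-- Lex is preserved by appending to lists of equal length. -/
lemma lex_append_of_lex {α : Type*} (r : α → α → Prop) :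
    ∀ {l l' : List α}, l.length = l'.length → List.Lex r l l' →
      ∀ s t : List α, List.Lex r (l ++ s) (l' ++ t) := by
  intro l l' hlen hlex
  induction hlex with
  | nil => simp at hlen
  | rel h => intro s t; exact List.Lex.rel h
  | @cons a as bs h ih =>
    intro s t
    exact List.Lex.cons (ih (by simpa using hlen) s t)

lemma lex_append_singleton {α : Type*} (r : α → α → Prop) {a b : α} (h : r a b) :
    ∀ l : List α, List.Lex r (l ++ [a]) (l ++ [b]) := by
  intro l
  induction l with
  | nil => exact List.Lex.rel h
  | cons x xs ih => exact List.Lex.cons ih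

/-- Decompose a walk between distinct vertices as `concat`. -/
lemma exists_eq_concat {n : ℕ} {G : SimpleGraph (Fin n)} {u w : Fin n} (hne : u ≠ w)
    (q : G.Walk u w) : ∃ (x : Fin n) (r : G.Walk u x) (h : G.Adj x w), q = r.concat h := by
  cases q with
  | nil => exact absurd rfl hne
  | cons h q' =>
    obtain ⟨x, r, h', hq⟩ := SimpleGraph.Walk.exists_cons_eq_concat h q'
    exact ⟨x, r, h', hq⟩

/-- `WalkPrec` is transitive. -/
lemma walkPrec_trans {n : ℕ} {G : SimpleGraph (Fin n)} {u a b c : Fin n}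
    {p : G.Walk u a} {q : G.Walk u b} {r : G.Walk u c}
    (h1 : WalkPrec p q) (h2 : WalkPrec q r) : WalkPrec p r := by
  rcases h1 with h1 | ⟨h1, h1'⟩ <;> rcases h2 with h2 | ⟨h2, h2'⟩
  · exact Or.inl (h1.trans h2)
  · exact Or.inl (h2 ▸ h1)
  · exact Or.inl (h1 ▸ h2)
  · exact Or.inr ⟨h1.trans h2, (lt_trans (h1' : p.support < q.support) h2' : p.support < r.support)⟩

/-- Lifting `WalkPrec` through `concat`. -/
lemma walkPrec_concat {n : ℕ} {G : SimpleGraph (Fin n)} {u a b x y : Fin n}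
    {p : G.Walk u a} {q : G.Walk u b} (h1 : G.Adj a x) (h2 : G.Adj b y)
    (h : WalkPrec p q) : WalkPrec (p.concat h1) (q.concat h2) := by
  rcases h with h | ⟨hlen, hlex⟩
  · exact Or.inl (by simp only [SimpleGraph.Walk.length_concat]; omega)
  · refine Or.inr ⟨by simp [SimpleGraph.Walk.length_concat, hlen], ?_⟩
    rw [SimpleGraph.Walk.support_concat, SimpleGraph.Walk.support_concat]
    exact lex_append_of_lex _ (by
      rw [SimpleGraph.Walk.length_support, SimpleGraph.Walk.length_support, hlen]) hlex _ _

/-- Every reachable vertex has a lexicographically-least shortest walk. -/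
lemma exists_isLLSP {n : ℕ} {G : SimpleGraph (Fin n)} {u x : Fin n} (q : G.Walk u x) :
    ∃ r : G.Walk u x, IsLLSP r := by
  -- minimal length
  have hwf := (Nat.lt_wfRel.wf).has_min {m | ∃ r : G.Walk u x, r.length = m}
    ⟨q.length, q, rfl⟩
  obtain ⟨L, ⟨r1, hr1⟩, hLmin⟩ := hwf
  -- walks of length L form a finite set
  set s : Set (G.Walk u x) := {r | r.length = L} with hs
  have hsfin : s.Finite := by
    apply Set.Finite.of_finite_image (f := fun r => SimpleGraph.Walk.support r)
    · apply Set.Finite.subset (List.finite_length_eq (Fin n) (L + 1))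
      rintro l ⟨r, hr, rfl⟩
      simp only [Set.mem_setOf_eq, SimpleGraph.Walk.length_support]
      exact congrArg (· + 1) hr
    · intro r _ r' _ h
      exact walk_eq_of_support_eq r r' h
  obtain ⟨r₀, hr₀s, hr₀min⟩ := Set.exists_min_image s (fun r => r.support) hsfin ⟨r1, hr1⟩
  refine ⟨r₀, ?_⟩
  intro r hne
  have hrL : ¬ r.length < L := hLmin r.length ⟨r, rfl⟩
  rcases Nat.lt_or_ge L r.length with hlt | hge
  · exact Or.inl (hr₀s.trans_lt hlt)
  · have hrLeq : r.length = L := le_antisymm hge (Nat.not_lt.mp hrL)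
    have hle : r₀.support ≤ r.support := hr₀min r hrLeq
    have hnesup : r₀.support ≠ r.support := fun h => hne (walk_eq_of_support_eq r r₀ h.symm)
    have hlt : r₀.support < r.support := lt_of_le_of_ne hle hnesup
    exact Or.inr ⟨hr₀s.trans hrLeq.symm, hlt⟩

/-- Correctness of lexicographical BFS.  Let `u ∉ S`, and let `v ∉ S` be the first
vertex in lexicographical-BFS order from `u` having a neighbor in `S` — i.e. the
BFS tree path `p` to `v` is the lexicographically-least shortest `u`–`v` path, and
for every other vertex `w` with a neighbor in `S`, the lexicographically-least
shortest `u`–`w` path strictly succeeds `p`.  Let `c` be the smallest-ID neighbor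
of `v` in `S`.  Then the concatenation of `p` with the edge `(v, c)` is the
lexicographically-least shortest path from `u` to the set `S`, ending at the
anchor `anc_S(u) = c`. -/
theorem stmt18 {n : ℕ} {G : SimpleGraph (Fin n)} (S : Set (Fin n)) (u v c : Fin n)
    (hu : u ∉ S) (hv : v ∉ S)
    (p : G.Walk u v) (hp : IsLLSP p)
    (hvc : G.Adj v c) (hcS : c ∈ S)
    (hcmin : ∀ c' ∈ S, G.Adj v c' → c ≤ c')
    (hfirst : ∀ w, w ≠ v → (∃ c' ∈ S, G.Adj w c') →
      ∀ q : G.Walk u w, IsLLSP q → WalkPrec p q) :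
    IsAnchorPath S (p.concat hvc) := by
  -- main claim, covering both remaining goals
  have key : ∀ (w : Fin n), w ∈ S → ∀ q : G.Walk u w,
      ¬ (w = c ∧ HEq q (p.concat hvc)) →
      WalkPrec (p.concat hvc) q := by
    intro w hw q hqne
    have huw : u ≠ w := fun h => hu (h ▸ hw)
    obtain ⟨x, r, hxw, rfl⟩ := exists_eq_concat huw q
    by_cases hxv : x = v
    · subst hxv
      by_cases hrp : r = p
      · subst hrp
        -- endpoint w must differ from c, else q = p.concat hvc
        have hwc : w ≠ c := by
          intro hwc
          subst hwc
          exact hqne ⟨rfl, HEq.refl _⟩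
        have hcw : c < w := lt_of_le_of_ne (hcmin w hw hxw) (Ne.symm hwc)
        refine Or.inr ⟨by simp [SimpleGraph.Walk.length_concat], ?_⟩
        rw [SimpleGraph.Walk.support_concat, SimpleGraph.Walk.support_concat]
        exact lex_append_singleton _ hcw _
      · exact walkPrec_concat hvc hxw (hp r hrp)
    · obtain ⟨r₀, hr₀⟩ := exists_isLLSP r
      have h1 : WalkPrec p r₀ := hfirst x hxv ⟨w, hw, hxw⟩ r₀ hr₀
      have h2 : WalkPrec p r := by
        by_cases hrr : r = r₀
        · exact hrr ▸ h1
        · exact walkPrec_trans h1 (hr₀ r hrr)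
      exact walkPrec_concat hvc hxw h2
  refine ⟨hcS, ?_, ?_⟩
  · intro q hq
    exact key c hcS q (fun ⟨_, hh⟩ => hq (eq_of_heq hh))
  · intro w hw hwc q
    exact key w hw q (fun ⟨hwc', _⟩ => hwc hwc')
end
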